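/- For any bounded linear operators T_1,…,T_n on a complex Hilbert space H: w_e(T_1,…,T_n) ≤ w(T_1,…,T_n), and (1/(2√n))·‖[T_1,…,T_n]‖ ≤ w_e(T_1,…,T_n) ≤ ‖[T_1,…,T_n]‖. -/

import Mathlib

noncomputable section

set_option maxHeartbeats 1000000


lemma aux_norm_le_two_mul {H : Type*} [NormedAddCommGroup H] [InnerProductSpace ℂ H]
    (A : H →L[ℂ] H) {C : ℝ} (hC : 0 ≤ C)
    (hb : ∀ z : H, ‖(inner ℂ (A z) z : ℂ)‖ ≤ C * ‖z‖ ^ 2) : ‖A‖ ≤ 2 * C := by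
  refine A.opNorm_le_bound (by positivity) fun x => ?_
  rcases eq_or_ne x 0 with hx | hx
  · simp [hx]
  have hAx : (0:ℝ) < ‖x‖ := norm_pos_iff.mpr hx
  rcases eq_or_ne (A x) 0 with h0 | h0
  · simp [h0]; positivity
  have hAxn : (0:ℝ) < ‖A x‖ := norm_pos_iff.mpr h0
  set y : H := (((‖x‖ / ‖A x‖ : ℝ) : ℂ)) • A x with hy
  have hyn : ‖y‖ = ‖x‖ := by
    rw [hy, norm_smul]
    simp [abs_of_nonneg (div_nonneg hAx.le hAxn.le), div_mul_cancel₀ _ hAxn.ne']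
  have hval : ‖(inner ℂ (A x) y : ℂ)‖ = ‖x‖ * ‖A x‖ := by
    have h2 : (inner ℂ (A x) (A x) : ℂ) = ((‖A x‖ ^ 2 : ℝ) : ℂ) := by
      exact_mod_cast inner_self_eq_norm_sq_to_K (𝕜 := ℂ) (A x)
    rw [hy, inner_smul_right, h2, ← Complex.ofReal_mul, Complex.norm_real,
      Real.norm_eq_abs, abs_of_nonneg (by positivity)]
    field_simp
  have hpol := inner_map_polarization (A : H →ₗ[ℂ] H) y x
  simp only [ContinuousLinearMap.coe_coe] at hpol
  set a1 : ℂ := inner ℂ (A (y + x)) (y + x) with ha1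
  set a2 : ℂ := inner ℂ (A (y - x)) (y - x) with ha2
  set a3 : ℂ := inner ℂ (A (y + Complex.I • x)) (y + Complex.I • x) with ha3
  set a4 : ℂ := inner ℂ (A (y - Complex.I • x)) (y - Complex.I • x) with ha4
  have hb4 : ‖(inner ℂ (A x) y : ℂ)‖ ≤ (‖a1‖ + ‖a2‖ + ‖a3‖ + ‖a4‖) / 4 := by
    rw [hpol, norm_div]
    have h4 : ‖(4:ℂ)‖ = 4 := by norm_num
    rw [h4]
    gcongr
    calc ‖a1 - a2 + Complex.I * a3 - Complex.I * a4‖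
        ≤ ‖a1 - a2 + Complex.I * a3‖ + ‖Complex.I * a4‖ := norm_sub_le _ _
      _ ≤ ‖a1 - a2‖ + ‖Complex.I * a3‖ + ‖Complex.I * a4‖ := by
          have := norm_add_le (a1 - a2) (Complex.I * a3); linarith
      _ ≤ ‖a1‖ + ‖a2‖ + ‖a3‖ + ‖a4‖ := by
          have := norm_sub_le a1 a2
          simp only [norm_mul, Complex.norm_I, one_mul]
          linarith
  have e1 : ‖a1‖ ≤ C * ‖y + x‖ ^ 2 := hb _
  have e2 : ‖a2‖ ≤ C * ‖y - x‖ ^ 2 := hb _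
  have e3 : ‖a3‖ ≤ C * ‖y + Complex.I • x‖ ^ 2 := hb _
  have e4 : ‖a4‖ ≤ C * ‖y - Complex.I • x‖ ^ 2 := hb _
  have hpar1 : ‖y + x‖ ^ 2 + ‖y - x‖ ^ 2 = 2 * (‖x‖ ^ 2 + ‖x‖ ^ 2) := by
    have := parallelogram_law_with_norm ℂ y x
    rw [hyn] at this
    linarith
  have hpar2 : ‖y + Complex.I • x‖ ^ 2 + ‖y - Complex.I • x‖ ^ 2
      = 2 * (‖x‖ ^ 2 + ‖x‖ ^ 2) := by
    have := parallelogram_law_with_norm ℂ y (Complex.I • x)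
    have hIx : ‖Complex.I • x‖ = ‖x‖ := by rw [norm_smul]; simp
    rw [hIx, hyn] at this
    linarith
  have key : ‖x‖ * ‖A x‖ ≤ 2 * C * ‖x‖ ^ 2 := by
    rw [← hval]
    calc ‖(inner ℂ (A x) y : ℂ)‖ ≤ (‖a1‖ + ‖a2‖ + ‖a3‖ + ‖a4‖) / 4 := hb4
      _ ≤ (C * ‖y + x‖ ^ 2 + C * ‖y - x‖ ^ 2 + C * ‖y + Complex.I • x‖ ^ 2
          + C * ‖y - Complex.I • x‖ ^ 2) / 4 := by gcongr
      _ = 2 * C * ‖x‖ ^ 2 := by linear_combination (C / 4) * hpar1 + (C / 4) * hpar2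
  calc ‖A x‖ = ‖x‖⁻¹ * (‖x‖ * ‖A x‖) := by field_simp
    _ ≤ ‖x‖⁻¹ * (2 * C * ‖x‖ ^ 2) := by gcongr
    _ = 2 * C * ‖x‖ := by field_simp


lemma aux_sum_sq_le {H : Type*} [NormedAddCommGroup H] [InnerProductSpace ℂ H]
    [CompleteSpace H] {n : ℕ} (T : Fin n → H →L[ℂ] H) (h : H) (hh : ‖h‖ = 1) :
    ∑ j, ‖(inner ℂ ((T j) h) h : ℂ)‖ ^ 2 ≤ ‖∑ i, T i * ContinuousLinearMap.adjoint (T i)‖ := by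
  set S := ∑ i, T i * ContinuousLinearMap.adjoint (T i) with hS
  have step1 : ∀ j, ‖(inner ℂ ((T j) h) h : ℂ)‖ ≤ ‖ContinuousLinearMap.adjoint (T j) h‖ := by
    intro j
    have e1 : (inner ℂ ((T j) h) h : ℂ)
        = starRingEnd ℂ (inner ℂ (ContinuousLinearMap.adjoint (T j) h) h) := by
      rw [ContinuousLinearMap.adjoint_inner_left, inner_conj_symm]
    rw [e1, RCLike.norm_conj]
    calc ‖(inner ℂ (ContinuousLinearMap.adjoint (T j) h) h : ℂ)‖
        ≤ ‖ContinuousLinearMap.adjoint (T j) h‖ * ‖h‖ := norm_inner_le_norm _ _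
      _ = ‖ContinuousLinearMap.adjoint (T j) h‖ := by rw [hh, mul_one]
  have step2 : ∑ j, ‖ContinuousLinearMap.adjoint (T j) h‖ ^ 2
      = RCLike.re (inner ℂ h (S h) : ℂ) := by
    have e2 : ∀ j, (‖ContinuousLinearMap.adjoint (T j) h‖ ^ 2 : ℝ)
        = RCLike.re (inner ℂ h ((T j * ContinuousLinearMap.adjoint (T j)) h) : ℂ) := by
      intro j
      have e3 : (inner ℂ h ((T j * ContinuousLinearMap.adjoint (T j)) h) : ℂ)
          = inner ℂ (ContinuousLinearMap.adjoint (T j) h) (ContinuousLinearMap.adjoint (T j) h) := by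
        rw [ContinuousLinearMap.mul_apply, ContinuousLinearMap.adjoint_inner_left]
      rw [e3, ← @norm_sq_eq_re_inner ℂ]
    rw [Finset.sum_congr rfl fun j _ => e2 j]
    rw [hS]
    simp only [ContinuousLinearMap.sum_apply, inner_sum, map_sum]
  have step3 : RCLike.re (inner ℂ h (S h) : ℂ) ≤ ‖S‖ := by
    calc RCLike.re (inner ℂ h (S h) : ℂ) ≤ ‖(inner ℂ h (S h) : ℂ)‖ := RCLike.re_le_norm _
      _ ≤ ‖h‖ * ‖S h‖ := norm_inner_le_norm _ _
      _ ≤ ‖h‖ * (‖S‖ * ‖h‖) := by gcongr; exact S.le_opNorm h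
      _ = ‖S‖ := by rw [hh]; ring
  calc ∑ j, ‖(inner ℂ ((T j) h) h : ℂ)‖ ^ 2
      ≤ ∑ j, ‖ContinuousLinearMap.adjoint (T j) h‖ ^ 2 := by
        apply Finset.sum_le_sum
        intro j _
        have := step1 j
        have h0 : (0:ℝ) ≤ ‖(inner ℂ ((T j) h) h : ℂ)‖ := norm_nonneg _
        nlinarith
    _ = RCLike.re (inner ℂ h (S h) : ℂ) := step2
    _ ≤ ‖S‖ := step3


lemma aux_joint_elt_le {H : Type*} [NormedAddCommGroup H] [InnerProductSpace ℂ H]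
    {n : ℕ} (T : Fin n → H →L[ℂ] H) (h : List (Fin n) → H)
    (hnorm : (∑' α : List (Fin n), ‖h α‖ ^ 2) = 1) :
    ‖∑' α : List (Fin n), ∑ j : Fin n, (inner ℂ (h α) ((T j) (h (j :: α))) : ℂ)‖
      ≤ ∑ j : Fin n, ‖T j‖ := by
  have hM0 : (0:ℝ) ≤ ∑ j : Fin n, ‖T j‖ :=
    Finset.sum_nonneg fun j _ => norm_nonneg _
  have hsq : Summable (fun α : List (Fin n) => ‖h α‖ ^ 2) := by
    by_contra hc
    rw [tsum_eq_zero_of_not_summable hc] at hnorm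
    norm_num at hnorm
  have hcons : ∀ j : Fin n, Summable (fun α : List (Fin n) => ‖h (j :: α)‖ ^ 2) := by
    intro j
    exact hsq.comp_injective (fun a b hab => by simpa using hab)
  have htail : ∀ j : Fin n, (∑' α : List (Fin n), ‖h (j :: α)‖ ^ 2) ≤ 1 := by
    intro j
    rw [← hnorm]
    exact Summable.tsum_le_tsum_of_inj (fun α => j :: α) (fun a b hab => by simpa using hab)
      (fun c _ => by positivity) (fun α => le_rfl) (hcons j) hsq
  set G : List (Fin n) → ℂ := fun α => ∑ j : Fin n, (inner ℂ (h α) ((T j) (h (j :: α))) : ℂ)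
    with hG
  set M : List (Fin n) → ℝ :=
    fun α => ∑ j : Fin n, ‖T j‖ / 2 * (‖h α‖ ^ 2 + ‖h (j :: α)‖ ^ 2) with hMdef
  have hGM : ∀ α, ‖G α‖ ≤ M α := by
    intro α
    refine (norm_sum_le _ _).trans (Finset.sum_le_sum fun j _ => ?_)
    calc ‖(inner ℂ (h α) ((T j) (h (j :: α))) : ℂ)‖
        ≤ ‖h α‖ * ‖(T j) (h (j :: α))‖ := norm_inner_le_norm _ _
      _ ≤ ‖h α‖ * (‖T j‖ * ‖h (j :: α)‖) :=
          mul_le_mul_of_nonneg_left ((T j).le_opNorm _) (norm_nonneg _)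
      _ ≤ ‖T j‖ / 2 * (‖h α‖ ^ 2 + ‖h (j :: α)‖ ^ 2) := by
          nlinarith [norm_nonneg (T j), sq_nonneg (‖h α‖ - ‖h (j :: α)‖), norm_nonneg (h α), norm_nonneg (h (j :: α))]
  have hMsummable : Summable M := by
    exact summable_sum fun j _ => ((hsq.add (hcons j)).mul_left _)
  rcases em (Summable G) with hGs | hGs
  · have hGnorm : Summable (fun α => ‖G α‖) :=
      Summable.of_nonneg_of_le (fun _ => norm_nonneg _) hGM hMsummable
    calc ‖∑' α, G α‖ ≤ ∑' α, ‖G α‖ := norm_tsum_le_tsum_norm hGnorm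
      _ ≤ ∑' α, M α := Summable.tsum_le_tsum hGM hGnorm hMsummable
      _ = ∑ j : Fin n, (‖T j‖ / 2 * ((∑' α, ‖h α‖ ^ 2) + ∑' α, ‖h (j :: α)‖ ^ 2)) := by
          rw [hMdef, Summable.tsum_finsetSum (fun j _ => ((hsq.add (hcons j)).mul_left _))]
          refine Finset.sum_congr rfl fun j _ => ?_
          rw [tsum_mul_left, Summable.tsum_add hsq (hcons j)]
      _ ≤ ∑ j : Fin n, (‖T j‖ / 2 * (1 + 1)) := by
          apply Finset.sum_le_sum
          intro j _
          have := htail j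
          have h1 : (0:ℝ) ≤ ‖T j‖ / 2 := by positivity
          rw [hnorm]
          nlinarith
      _ = ∑ j : Fin n, ‖T j‖ := by refine Finset.sum_congr rfl fun j _ => ?_; ring
  · rw [tsum_eq_zero_of_not_summable hGs]
    simpa using hM0


lemma aux_construct {H : Type*} [NormedAddCommGroup H] [InnerProductSpace ℂ H]
    {n : ℕ} (T : Fin n → H →L[ℂ] H) (h : H) (hh : ‖h‖ = 1) {r : ℝ}
    (hr0 : 0 < r) (hr1 : r < 1)
    (hs : 0 < Real.sqrt (∑ j, ‖(inner ℂ ((T j) h) h : ℂ)‖ ^ 2)) :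
    ∃ hf : List (Fin n) → H, (∑' α : List (Fin n), ‖hf α‖ ^ 2) = 1 ∧
      ‖∑' α : List (Fin n), ∑ j : Fin n, (inner ℂ (hf α) ((T j) (hf (j :: α))) : ℂ)‖
        = r * Real.sqrt (∑ j, ‖(inner ℂ ((T j) h) h : ℂ)‖ ^ 2) := by
  set c : Fin n → ℂ := fun j => inner ℂ ((T j) h) h with hc
  set s : ℝ := Real.sqrt (∑ j, ‖c j‖ ^ 2) with hsdef
  have hsum_nonneg : (0:ℝ) ≤ ∑ j, ‖c j‖ ^ 2 := Finset.sum_nonneg fun j _ => by positivity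
  have hs2 : s ^ 2 = ∑ j, ‖c j‖ ^ 2 := Real.sq_sqrt hsum_nonneg
  have hsne : s ≠ 0 := ne_of_gt hs
  set ν : Fin n → ℂ := fun j => c j / (s : ℂ) with hν
  have hνnorm : ∀ j, ‖ν j‖ ^ 2 = ‖c j‖ ^ 2 / s ^ 2 := by
    intro j
    rw [hν]
    rw [norm_div, Complex.norm_real, Real.norm_eq_abs, abs_of_pos hs, div_pow]
  set g : List (Fin n) → ℂ := fun α => (r : ℂ) ^ α.length * (α.map ν).prod with hg
  have hg_nil : g [] = 1 := by simp [hg]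
  have hg_cons : ∀ (j : Fin n) (α : List (Fin n)), g (j :: α) = ((r : ℂ) * ν j) * g α := by
    intro j α
    simp only [hg, List.length_cons, List.map_cons, List.prod_cons, pow_succ]
    ring
  set F : List (Fin n) → ℝ := fun α => ‖g α‖ ^ 2 with hF
  have hF_nonneg : ∀ α, 0 ≤ F α := fun α => by positivity
  have hF_nil : F [] = 1 := by simp [hF, hg_nil]
  set w : Fin n → ℝ := fun j => r ^ 2 * ‖ν j‖ ^ 2 with hw
  have hF_prod : ∀ α : List (Fin n), F α = (α.map w).prod := by
    intro α
    induction α with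
    | nil => simp [hF_nil]
    | cons j α ih =>
      simp only [List.map_cons, List.prod_cons, ← ih, hF, hg_cons, norm_mul, mul_pow,
        Complex.norm_real, Real.norm_eq_abs, abs_of_pos hr0, hw]
      try ring
      exact congrArg (r ^ 2 * ‖ν j‖ ^ 2 * ·) ih
  have hsumw : ∑ j, w j = r ^ 2 := by
    rw [hw]
    simp only
    rw [← Finset.mul_sum]
    have : ∑ j, ‖ν j‖ ^ 2 = 1 := by
      rw [Finset.sum_congr rfl fun j _ => hνnorm j, ← Finset.sum_div, ← hs2]
      field_simp
    rw [this, mul_one]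
  -- summability of F
  have hFs : Summable F := by
    rw [← (List.equivSigmaTuple (α := Fin n)).symm.summable_iff]
    have heq : (F ∘ (List.equivSigmaTuple (α := Fin n)).symm)
        = fun p : Σ k, Fin k → Fin n => ∏ i, w (p.2 i) := by
      funext p
      rcases p with ⟨k, v⟩
      simp only [Function.comp_apply, List.equivSigmaTuple_symm_apply, hF_prod,
        List.map_ofFn, List.prod_ofFn]
    rw [heq]
    rw [summable_sigma_of_nonneg (fun p => Finset.prod_nonneg fun i _ => by positivity)]
    constructor
    · intro k
      exact Summable.of_finite
    · have hval : ∀ k : ℕ, (∑' v : Fin k → Fin n, ∏ i, w (v i)) = (r ^ 2) ^ k := by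
        intro k
        rw [tsum_fintype, ← Fintype.sum_pow w k]
        rw [hsumw]
      simp only [hval]
      exact summable_geometric_of_lt_one (by positivity) (by nlinarith)
  set t : ℝ := ∑' α, F α with ht
  have ht1 : 1 ≤ t := by
    rw [← hF_nil]
    exact Summable.le_tsum hFs [] fun β _ => hF_nonneg β
  have ht0 : 0 < t := lt_of_lt_of_le one_pos ht1
  set k : ℝ := (Real.sqrt t)⁻¹ with hk
  have hk0 : 0 < k := by positivity
  have hk2t : k ^ 2 * t = 1 := by
    rw [hk, inv_pow, Real.sq_sqrt ht0.le]
    field_simp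
  clear_value s t k
  refine ⟨fun α => ((k : ℂ) * g α) • h, ?_, ?_⟩
  · have hnormeq : ∀ α : List (Fin n), ‖((k : ℂ) * g α) • h‖ ^ 2 = k ^ 2 * F α := by
      intro α
      rw [norm_smul, hh, mul_one, norm_mul, Complex.norm_real, Real.norm_eq_abs,
        abs_of_pos hk0, mul_pow]
    calc (∑' α : List (Fin n), ‖((k : ℂ) * g α) • h‖ ^ 2)
        = ∑' α : List (Fin n), k ^ 2 * F α := tsum_congr hnormeq
      _ = k ^ 2 * t := by rw [tsum_mul_left, ht]
      _ = 1 := hk2t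
  · have hd : ∑ j, (ν j * inner ℂ h ((T j) h) : ℂ) = (s : ℂ) := by
      have e1 : ∀ j : Fin n, (ν j * inner ℂ h ((T j) h) : ℂ) = ((‖c j‖ ^ 2 : ℝ) : ℂ) / (s : ℂ) := by
        intro j
        have : (inner ℂ h ((T j) h) : ℂ) = starRingEnd ℂ (c j) := by
          rw [hc, inner_conj_symm]
        rw [this, hν, div_mul_eq_mul_div, RCLike.mul_conj]
        norm_num
      rw [Finset.sum_congr rfl fun j _ => e1 j, ← Finset.sum_div]
      rw [← Complex.ofReal_sum, ← hs2]
      push_cast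
      rw [sq]
      exact mul_div_cancel_left₀ _ (by exact_mod_cast hsne)
    have hterm : ∀ α : List (Fin n),
        (∑ j : Fin n, (inner ℂ (((k : ℂ) * g α) • h) ((T j) ((((k : ℂ) * g (j :: α))) • h)) : ℂ))
          = ((k ^ 2 * r * s : ℝ) : ℂ) * ((F α : ℝ) : ℂ) := by
      intro α
      have e2 : ∀ j : Fin n,
          (inner ℂ (((k : ℂ) * g α) • h) ((T j) ((((k : ℂ) * g (j :: α))) • h)) : ℂ)
            = (k : ℂ) ^ 2 * (r : ℂ) * (starRingEnd ℂ (g α) * g α)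
              * (ν j * inner ℂ h ((T j) h)) := by
        intro j
        rw [map_smul, inner_smul_left, inner_smul_right, hg_cons, map_mul,
          Complex.conj_ofReal]
        ring
      rw [Finset.sum_congr rfl fun j _ => e2 j, ← Finset.mul_sum, hd]
      rw [Complex.conj_mul']
      simp only [hF]
      push_cast
      ring
    calc ‖∑' α : List (Fin n),
          ∑ j : Fin n, (inner ℂ (((k : ℂ) * g α) • h) ((T j) ((((k : ℂ) * g (j :: α))) • h)) : ℂ)‖
        = ‖∑' α : List (Fin n), ((k ^ 2 * r * s : ℝ) : ℂ) * ((F α : ℝ) : ℂ)‖ := by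
          rw [tsum_congr hterm]
      _ = ‖((k ^ 2 * r * s : ℝ) : ℂ) * ((t : ℝ) : ℂ)‖ := by
          rw [tsum_mul_left, ht, Complex.ofReal_tsum]
      _ = r * s := by
          rw [norm_mul, Complex.norm_real, Complex.norm_real, Real.norm_eq_abs,
            Real.norm_eq_abs,
            abs_of_nonneg (mul_nonneg (mul_nonneg (sq_nonneg k) hr0.le) hs.le),
            abs_of_nonneg ht0.le]
          linear_combination (r * s) * hk2t

/-- The joint numerical radius of a tuple of operators indexed by a finite set `ι`. -/
def jointNumRad {H : Type*} [NormedAddCommGroup H] [InnerProductSpace ℂ H]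
    {ι : Type*} [Fintype ι] (T : ι → H →L[ℂ] H) : ℝ :=
  sSup {x : ℝ | ∃ h : List ι → H, (∑' α : List ι, ‖h α‖ ^ 2) = 1 ∧
    x = ‖∑' α : List ι, ∑ j : ι, (inner ℂ (h α) ((T j) (h (j :: α))) : ℂ)‖}

/-- The euclidean operator radius of a tuple of operators. -/
def euclidRad {H : Type*} [NormedAddCommGroup H] [InnerProductSpace ℂ H]
    {ι : Type*} [Fintype ι] (T : ι → H →L[ℂ] H) : ℝ :=
  sSup {x : ℝ | ∃ h : H, ‖h‖ = 1 ∧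
    x = Real.sqrt (∑ j : ι, ‖(inner ℂ ((T j) h) h : ℂ)‖ ^ 2)}

/-- `w_e(T_1,…,T_n) ≤ w(T_1,…,T_n)` and
`(1/(2√n))·‖[T_1,…,T_n]‖ ≤ w_e(T_1,…,T_n) ≤ ‖[T_1,…,T_n]‖`, where
`‖[T_1,…,T_n]‖ = ‖∑ T_i T_i^*‖^{1/2}`. -/
theorem euclidRad_le_jointNumRad_and_bounds {H : Type*} [NormedAddCommGroup H]
    [InnerProductSpace ℂ H] [CompleteSpace H] {n : ℕ} (T : Fin n → H →L[ℂ] H) :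
    euclidRad T ≤ jointNumRad T ∧
    (1 / (2 * Real.sqrt n)) * Real.sqrt ‖∑ i, T i * ContinuousLinearMap.adjoint (T i)‖ ≤
      euclidRad T ∧
    euclidRad T ≤ Real.sqrt ‖∑ i, T i * ContinuousLinearMap.adjoint (T i)‖ := by
  set S := ∑ i, T i * ContinuousLinearMap.adjoint (T i) with hS
  have hE0 : 0 ≤ euclidRad T := by
    apply Real.sSup_nonneg
    rintro x ⟨h, hh, rfl⟩
    exact Real.sqrt_nonneg _
  have hJ0 : 0 ≤ jointNumRad T := by
    apply Real.sSup_nonneg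
    rintro x ⟨h, hn, rfl⟩
    exact norm_nonneg _
  have hJbdd : BddAbove {x : ℝ | ∃ h : List (Fin n) → H,
      (∑' α : List (Fin n), ‖h α‖ ^ 2) = 1 ∧
      x = ‖∑' α : List (Fin n), ∑ j : Fin n, (inner ℂ (h α) ((T j) (h (j :: α))) : ℂ)‖} := by
    refine ⟨∑ j : Fin n, ‖T j‖, fun x hx => ?_⟩
    obtain ⟨h, hn, rfl⟩ := hx
    exact aux_joint_elt_le T h hn
  have h3 : euclidRad T ≤ Real.sqrt ‖S‖ := by
    apply Real.sSup_le _ (Real.sqrt_nonneg _)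
    rintro x ⟨h, hh, rfl⟩
    exact Real.sqrt_le_sqrt (aux_sum_sq_le T h hh)
  have hEbdd : BddAbove {x : ℝ | ∃ h : H, ‖h‖ = 1 ∧
      x = Real.sqrt (∑ j : Fin n, ‖(inner ℂ ((T j) h) h : ℂ)‖ ^ 2)} := by
    refine ⟨Real.sqrt ‖S‖, fun x hx => ?_⟩
    obtain ⟨h, hh, rfl⟩ := hx
    exact Real.sqrt_le_sqrt (aux_sum_sq_le T h hh)
  have h1 : euclidRad T ≤ jointNumRad T := by
    apply Real.sSup_le _ hJ0
    rintro x ⟨h, hh, rfl⟩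
    set s : ℝ := Real.sqrt (∑ j : Fin n, ‖(inner ℂ ((T j) h) h : ℂ)‖ ^ 2) with hsdef
    rcases (Real.sqrt_nonneg (∑ j : Fin n, ‖(inner ℂ ((T j) h) h : ℂ)‖ ^ 2)).lt_or_eq
      with hs | hs
    · have hrs : ∀ r : ℝ, 0 < r → r < 1 → r * s ≤ jointNumRad T := by
        intro r hr0 hr1
        obtain ⟨hf, hnn, hv⟩ := aux_construct T h hh hr0 hr1 hs
        exact le_csSup hJbdd ⟨hf, hnn, hv.symm⟩
      by_contra hlt
      push_neg at hlt
      set J := jointNumRad T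
      have hr0 : (0:ℝ) < (J / s + 1) / 2 := by
        have : 0 ≤ J / s := div_nonneg hJ0 hs.le
        linarith
      have hr1 : (J / s + 1) / 2 < 1 := by
        have : J / s < 1 := (div_lt_one hs).mpr hlt
        linarith
      have hval : ((J / s + 1) / 2) * s = (J + s) / 2 := by
        field_simp
        rw [mul_add, mul_one, mul_div_assoc', mul_comm s J, mul_div_assoc, div_self (show s ≠ 0 from hs.ne'), mul_one]
      have := hrs _ hr0 hr1
      rw [hval] at this
      linarith
    · rw [hsdef, ← hs]
      exact hJ0
  refine ⟨h1, ?_, h3⟩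
  rcases Nat.eq_zero_or_pos n with hn | hn
  · subst hn
    have : S = 0 := by simp [hS]
    simpa [this] using hE0
  · have hnpos : (0:ℝ) < Real.sqrt n := Real.sqrt_pos.mpr (by exact_mod_cast hn)
    have hb : ∀ i : Fin n, ∀ z : H, ‖(inner ℂ ((T i) z) z : ℂ)‖ ≤ euclidRad T * ‖z‖ ^ 2 := by
      intro i z
      rcases eq_or_ne z 0 with hz | hz
      · simp [hz]
      have hzn : (0:ℝ) < ‖z‖ := norm_pos_iff.mpr hz
      set u : H := ((‖z‖⁻¹ : ℝ) : ℂ) • z with hu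
      have hun : ‖u‖ = 1 := by
        rw [hu, norm_smul, Complex.norm_real, Real.norm_eq_abs,
          abs_of_pos (inv_pos.mpr hzn)]
        field_simp
      have hmem : Real.sqrt (∑ j : Fin n, ‖(inner ℂ ((T j) u) u : ℂ)‖ ^ 2) ≤ euclidRad T :=
        le_csSup hEbdd ⟨u, hun, rfl⟩
      have hsingle : ‖(inner ℂ ((T i) u) u : ℂ)‖
          ≤ Real.sqrt (∑ j : Fin n, ‖(inner ℂ ((T j) u) u : ℂ)‖ ^ 2) := by
        rw [← Real.sqrt_sq (norm_nonneg ((inner ℂ ((T i) u) u : ℂ)))]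
        apply Real.sqrt_le_sqrt
        exact Finset.single_le_sum (f := fun j => ‖(inner ℂ ((T j) u) u : ℂ)‖ ^ 2)
          (fun j _ => by positivity) (Finset.mem_univ i)
      have hzu : z = ((‖z‖ : ℝ) : ℂ) • u := by
        rw [hu, smul_smul]
        rw [← Complex.ofReal_mul, mul_inv_cancel₀ hzn.ne']
        simp
      have hscale : (inner ℂ ((T i) z) z : ℂ)
          = ((‖z‖ ^ 2 : ℝ) : ℂ) * (inner ℂ ((T i) u) u : ℂ) := by
        conv_lhs => rw [hzu]
        rw [map_smul, inner_smul_left, inner_smul_right, Complex.conj_ofReal]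
        push_cast
        ring
      calc ‖(inner ℂ ((T i) z) z : ℂ)‖
          = ‖z‖ ^ 2 * ‖(inner ℂ ((T i) u) u : ℂ)‖ := by
            rw [hscale, norm_mul, Complex.norm_real, Real.norm_eq_abs,
              abs_of_nonneg (by positivity)]
        _ ≤ ‖z‖ ^ 2 * euclidRad T := by
            exact mul_le_mul_of_nonneg_left (hsingle.trans hmem) (by positivity)
        _ = euclidRad T * ‖z‖ ^ 2 := by ring
    have hTE : ∀ i : Fin n, ‖T i‖ ≤ 2 * euclidRad T := fun i =>
      aux_norm_le_two_mul (T i) hE0 (hb i)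
    have hSnorm : ‖S‖ ≤ (n : ℝ) * (2 * euclidRad T) ^ 2 := by
      calc ‖S‖ ≤ ∑ i : Fin n, ‖T i * ContinuousLinearMap.adjoint (T i)‖ := by
            rw [hS]; exact norm_sum_le _ _
        _ ≤ ∑ i : Fin n, ‖T i‖ * ‖ContinuousLinearMap.adjoint (T i)‖ :=
            Finset.sum_le_sum fun i _ => norm_mul_le _ _
        _ = ∑ i : Fin n, ‖T i‖ ^ 2 := by
            refine Finset.sum_congr rfl fun i _ => ?_
            rw [ContinuousLinearMap.adjoint.norm_map (T i), sq]
        _ ≤ ∑ i : Fin n, (2 * euclidRad T) ^ 2 :=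
            Finset.sum_le_sum fun i _ => pow_le_pow_left₀ (norm_nonneg _) (hTE i) 2
        _ = (n : ℝ) * (2 * euclidRad T) ^ 2 := by
            rw [Finset.sum_const, Finset.card_univ, Fintype.card_fin, nsmul_eq_mul]
    have hsqrt : Real.sqrt ‖S‖ ≤ Real.sqrt n * (2 * euclidRad T) := by
      calc Real.sqrt ‖S‖ ≤ Real.sqrt ((n : ℝ) * (2 * euclidRad T) ^ 2) :=
            Real.sqrt_le_sqrt hSnorm
        _ = Real.sqrt n * (2 * euclidRad T) := by
            rw [Real.sqrt_mul (by positivity), Real.sqrt_sq (by positivity)]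
    calc (1 / (2 * Real.sqrt n)) * Real.sqrt ‖S‖
        ≤ (1 / (2 * Real.sqrt n)) * (Real.sqrt n * (2 * euclidRad T)) := by
          exact mul_le_mul_of_nonneg_left hsqrt (by positivity)
      _ = euclidRad T := by
          field_simp
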